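/- arXiv:math/0205317 — 3 statements merged into one kernel-verified Lean document; each statement's English description precedes it below -/
import Mathlib

section
/- Let g ≥ 2, and let n₁, n₂, d₁, d₂ be integers with n₁, n₂ ≥ 1, n = n₁ + n₂, d = d₁ + d₂, and suppose α := (d₁n₂ − d₂n₁)/n₁ satisfies 0 < α < d/(n−1). Define C₁₂ = n₁n₂(g−1) − d₂n₁ + d₁n₂ and C₂₁ = n₁n₂(g−1) − d₁n₂ + d₂n₁ + d₁ − n₁(g−1). Then C₁₂ = n₁n₂(g−1) + n₁α > 0 and C₂₁ > n₁(n₂−1)(g−1) ≥ 0. -/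
/-- Codimension estimates for flip loci when k = 1: with α = (d₁n₂ − d₂n₁)/n₁ and
0 < α < d/(n−1), one has C₁₂ = n₁n₂(g−1) + n₁α > 0 and C₂₁ > n₁(n₂−1)(g−1) ≥ 0. -/
theorem stmt_11 (g n₁ n₂ d₁ d₂ n d : ℤ) (hg : 2 ≤ g) (hn₁ : 1 ≤ n₁) (hn₂ : 1 ≤ n₂)
    (hn : n = n₁ + n₂) (hd : d = d₁ + d₂)
    (hα₀ : (0 : ℝ) < ((d₁ : ℝ) * n₂ - (d₂ : ℝ) * n₁) / n₁)
    (hαL : ((d₁ : ℝ) * n₂ - (d₂ : ℝ) * n₁) / n₁ < (d : ℝ) / ((n : ℝ) - 1)) :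
    ((n₁ : ℝ) * n₂ * (g - 1) - d₂ * n₁ + d₁ * n₂ =
        (n₁ : ℝ) * n₂ * (g - 1) + n₁ * (((d₁ : ℝ) * n₂ - (d₂ : ℝ) * n₁) / n₁)) ∧
      (0 : ℝ) < (n₁ : ℝ) * n₂ * (g - 1) - d₂ * n₁ + d₁ * n₂ ∧
      (n₁ : ℝ) * (n₂ - 1) * (g - 1) <
        (n₁ : ℝ) * n₂ * (g - 1) - d₁ * n₂ + d₂ * n₁ + d₁ - n₁ * (g - 1) ∧
      (0 : ℝ) ≤ (n₁ : ℝ) * (n₂ - 1) * (g - 1) := by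
  have h1 : (1 : ℝ) ≤ (n₁ : ℝ) := by exact_mod_cast hn₁
  have h2 : (1 : ℝ) ≤ (n₂ : ℝ) := by exact_mod_cast hn₂
  have hg' : (2 : ℝ) ≤ (g : ℝ) := by exact_mod_cast hg
  have hn' : (n : ℝ) = n₁ + n₂ := by exact_mod_cast congrArg (Int.cast : ℤ → ℝ) hn
  have hd' : (d : ℝ) = d₁ + d₂ := by exact_mod_cast congrArg (Int.cast : ℤ → ℝ) hd
  have hn1 : (0 : ℝ) < n₁ := by linarith
  have hA : (0 : ℝ) < (d₁ : ℝ) * n₂ - (d₂ : ℝ) * n₁ := by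
    have := (div_pos_iff).mp hα₀
    rcases this with ⟨h, _⟩ | ⟨_, h⟩
    · exact h
    · linarith
  have hm1 : (0 : ℝ) < (n : ℝ) - 1 := by rw [hn']; linarith
  have hkey : ((d₁ : ℝ) * n₂ - (d₂ : ℝ) * n₁) * ((n : ℝ) - 1) < (d : ℝ) * n₁ :=
    (div_lt_div_iff₀ hn1 hm1).mp hαL
  refine ⟨?_, ?_, ?_, ?_⟩
  · rw [mul_div_cancel₀ _ (ne_of_gt hn1)]; ring
  · nlinarith [mul_pos hn1 (by linarith : (0 : ℝ) < (n₂ : ℝ))]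
  · -- need d₁ > d₁*n₂ - d₂*n₁ ; n*(d₁ - A) = d*n₁ - (n-1)*A > 0
    have hnpos : (0 : ℝ) < (n : ℝ) := by linarith
    have hid : (n : ℝ) * ((d₁ : ℝ) - ((d₁ : ℝ) * n₂ - (d₂ : ℝ) * n₁)) =
        (d : ℝ) * n₁ - ((d₁ : ℝ) * n₂ - (d₂ : ℝ) * n₁) * ((n : ℝ) - 1) := by
      rw [hn', hd']; ring
    have hpos : (0 : ℝ) < (n : ℝ) * ((d₁ : ℝ) - ((d₁ : ℝ) * n₂ - (d₂ : ℝ) * n₁)) := by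
      rw [hid]; linarith
    rcases mul_pos_iff.mp hpos with ⟨_, h⟩ | ⟨h, _⟩
    · linarith
    · linarith
  · have := mul_nonneg (mul_nonneg (by linarith : (0:ℝ) ≤ (n₁:ℝ))
      (by linarith : (0:ℝ) ≤ (n₂:ℝ) - 1)) (by linarith : (0:ℝ) ≤ (g:ℝ) - 1)
    linarith
end

section
/- Let g ≥ 2 and let k₁, k₂ be integers with k₂ ≥ 2 and 0 ≤ k₁ ≤ 1. Let d₁, d₂ be integers with d₁ > d₂ and d₂ ≥ (k₂−1)/k₂ · g + k₂ − 1. Then C₂₁ := g − 1 + d₂ − d₁ + k₂(d₁ − g + 1 − k₁) ≥ 2k₁ and moreover C₂₁ > 0, and C₁₂ := g − 1 + d₁ − d₂ + k₁(d₂ − g + 1 − k₂) ≥ (k₂ − k₁)/k₂ · g > 0. -/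
/-!
Write `e = d₂ - ((k₂ - 1)/k₂ · g + k₂ - 1) ≥ 0` for the excess of `d₂` over the existence bound
and `δ = d₁ - d₂ - 1 ≥ 0`. Then `C₂₁` and `C₁₂` are affine in `δ` and `e` with nonnegative
coefficients:
  `C₂₁ = (k₂ - 1) δ + k₂ e + (k₂ - 2 + k₂ (k₂ - k₁))`,
  `C₁₂ = (k₂ - k₁)/k₂ · g + δ + k₁ e`,
and the constant `k₂ - 2 + k₂ (k₂ - k₁)` is positive and at least `2 k₁` when `k₁ ≤ 1 < k₂`.
-/

namespace CoherentSystemFlip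

variable {K : Type*}

/-- Coherent systems of type `(1, d, k)` exist on a Petri curve of genus `g` only for
`d ≥ minDegree g k`. -/
def minDegree [Field K] (g k : K) : K := (k - 1) / k * g + k - 1

def c₂₁ [CommRing K] (g k₁ k₂ d₁ d₂ : K) : K := g - 1 + d₂ - d₁ + k₂ * (d₁ - g + 1 - k₁)

def c₁₂ [CommRing K] (g k₁ k₂ d₁ d₂ : K) : K := g - 1 + d₁ - d₂ + k₁ * (d₂ - g + 1 - k₂)

theorem intCast_c₂₁ [CommRing K] (g k₁ k₂ d₁ d₂ : ℤ) :
    ((c₂₁ g k₁ k₂ d₁ d₂ : ℤ) : K) = c₂₁ (g : K) k₁ k₂ d₁ d₂ := by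
  simp [c₂₁]

section Field

variable [Field K] {g k₁ k₂ d₁ d₂ : K}

theorem c₂₁_eq (hk₂ : k₂ ≠ 0) :
    c₂₁ g k₁ k₂ d₁ d₂ = (k₂ - 1) * (d₁ - d₂ - 1) + k₂ * (d₂ - minDegree g k₂)
      + (k₂ - 2 + k₂ * (k₂ - k₁)) := by
  unfold c₂₁ minDegree
  field_simp
  ring

theorem c₁₂_eq (hk₂ : k₂ ≠ 0) :
    c₁₂ g k₁ k₂ d₁ d₂ = (k₂ - k₁) / k₂ * g + (d₁ - d₂ - 1) + k₁ * (d₂ - minDegree g k₂) := by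
  unfold c₁₂ minDegree
  field_simp
  ring

end Field

section LinearOrderedField

variable [Field K] [LinearOrder K] [IsStrictOrderedRing K] {g k₁ k₂ d₁ d₂ : K}

theorem le_c₂₁ (hk₂ : 1 ≤ k₂) (hd : d₂ + 1 ≤ d₁) (hd₂ : minDegree g k₂ ≤ d₂) :
    k₂ - 2 + k₂ * (k₂ - k₁) ≤ c₂₁ g k₁ k₂ d₁ d₂ := by
  rw [c₂₁_eq (by positivity)]
  have hδ : 0 ≤ (k₂ - 1) * (d₁ - d₂ - 1) := mul_nonneg (by linarith) (by linarith)
  have he : 0 ≤ k₂ * (d₂ - minDegree g k₂) := mul_nonneg (by linarith) (by linarith)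
  linarith

theorem le_c₁₂ (hk₂ : k₂ ≠ 0) (hk₁ : 0 ≤ k₁) (hd : d₂ + 1 ≤ d₁) (hd₂ : minDegree g k₂ ≤ d₂) :
    (k₂ - k₁) / k₂ * g ≤ c₁₂ g k₁ k₂ d₁ d₂ := by
  rw [c₁₂_eq hk₂]
  have he : 0 ≤ k₁ * (d₂ - minDegree g k₂) := mul_nonneg hk₁ (by linarith)
  linarith

end LinearOrderedField

end CoherentSystemFlip

open CoherentSystemFlip in
/-- Flip estimates for rank 2: with k₂ ≥ 2, 0 ≤ k₁ ≤ 1, d₁ > d₂ and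
d₂ ≥ (k₂−1)/k₂·g + k₂−1, one has C₂₁ ≥ 2k₁, C₂₁ > 0, and
C₁₂ ≥ (k₂−k₁)/k₂·g > 0. -/
theorem stmt_12 (g k₁ k₂ d₁ d₂ : ℤ) (hg : 2 ≤ g) (hk₂ : 2 ≤ k₂)
    (hk₁0 : 0 ≤ k₁) (hk₁1 : k₁ ≤ 1) (hd : d₂ < d₁)
    (hd₂ : (d₂ : ℝ) ≥ ((k₂ : ℝ) - 1) / k₂ * g + k₂ - 1) :
    g - 1 + d₂ - d₁ + k₂ * (d₁ - g + 1 - k₁) ≥ 2 * k₁ ∧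
      0 < g - 1 + d₂ - d₁ + k₂ * (d₁ - g + 1 - k₁) ∧
      ((g : ℝ) - 1 + d₁ - d₂ + k₁ * ((d₂ : ℝ) - g + 1 - k₂) ≥
        ((k₂ : ℝ) - k₁) / k₂ * g) ∧
      (0 : ℝ) < ((k₂ : ℝ) - k₁) / k₂ * g := by
  have hdR : (d₂ : ℝ) + 1 ≤ d₁ := by exact_mod_cast hd
  have hk₂R : (2 : ℝ) ≤ k₂ := by exact_mod_cast hk₂
  have hk₁R : (k₁ : ℝ) ≤ 1 := by exact_mod_cast hk₁1
  have h₂₁ : k₂ - 2 + k₂ * (k₂ - k₁) ≤ c₂₁ g k₁ k₂ d₁ d₂ := by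
    have := le_c₂₁ (k₁ := (k₁ : ℝ)) (by linarith) hdR hd₂
    rw [← intCast_c₂₁] at this
    exact_mod_cast this
  unfold c₂₁ at h₂₁
  have hconst : 2 * k₁ ≤ k₂ - 2 + k₂ * (k₂ - k₁) := by nlinarith
  have hconst_pos : 0 < k₂ - 2 + k₂ * (k₂ - k₁) := by nlinarith
  refine ⟨by linarith, by linarith,
    le_c₁₂ (by positivity) (by exact_mod_cast hk₁0) hdR hd₂, ?_⟩
  have hg' : (0 : ℝ) < g := by exact_mod_cast (by linarith : 0 < g)
  exact mul_pos (div_pos (by linarith) (by linarith)) hg'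
end

section
/- Let g ≥ 2 and let n₁, n₂, d₁, d₂ be positive integers with n₂ = 1 or n₂ ≥ 2, and set α = (d₁n₂ − d₂n₁)/(3n₁), so that d₁/n₁ = d₂/n₂ + 3α/n₂. Assume α > 0. If n₂ = 1, assume d₂ ≥ (2g+6)/3 and d₁/n₁ > d₂. Then C₂₁ := n₁n₂(g−1) − d₁n₂ + d₂n₁ + 3d₁ − 3n₁(g−1) > 0 in each of the cases n₂ ≥ 3 (given additionally α < d₂/(n₂−3) when n₂ > 3), n₂ = 2 (given d₂ ≥ (2g+6)/3), and n₂ = 1. -/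
/-- Positivity of C₂₁ = n₁n₂(g−1) − d₁n₂ + d₂n₁ + 3d₁ − 3n₁(g−1) in the k=3 flip
analysis, with α = (d₁n₂ − d₂n₁)/(3n₁) > 0, in the cases n₂ = 3; n₂ > 3 with
α < d₂/(n₂−3); n₂ = 2 with d₂ ≥ (2g+6)/3; and n₂ = 1 with d₂ ≥ (2g+6)/3
and d₁/n₁ > d₂. -/
theorem stmt_16 (g n₁ n₂ d₁ d₂ : ℤ) (hg : 2 ≤ g)
    (hn₁ : 0 < n₁) (hn₂ : 0 < n₂) (hd₁ : 0 < d₁) (hd₂ : 0 < d₂)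
    (hα : (0 : ℝ) < ((d₁ : ℝ) * n₂ - (d₂ : ℝ) * n₁) / (3 * n₁)) :
    (n₂ = 3 → 0 < n₁ * n₂ * (g - 1) - d₁ * n₂ + d₂ * n₁ + 3 * d₁ - 3 * n₁ * (g - 1)) ∧
    (3 < n₂ → ((d₁ : ℝ) * n₂ - (d₂ : ℝ) * n₁) / (3 * n₁) < (d₂ : ℝ) / ((n₂ : ℝ) - 3) →
      0 < n₁ * n₂ * (g - 1) - d₁ * n₂ + d₂ * n₁ + 3 * d₁ - 3 * n₁ * (g - 1)) ∧
    (n₂ = 2 → (d₂ : ℝ) ≥ (2 * (g : ℝ) + 6) / 3 →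
      0 < n₁ * n₂ * (g - 1) - d₁ * n₂ + d₂ * n₁ + 3 * d₁ - 3 * n₁ * (g - 1)) ∧
    (n₂ = 1 → (d₂ : ℝ) ≥ (2 * (g : ℝ) + 6) / 3 → (d₁ : ℝ) / n₁ > (d₂ : ℝ) →
      0 < n₁ * n₂ * (g - 1) - d₁ * n₂ + d₂ * n₁ + 3 * d₁ - 3 * n₁ * (g - 1)) := by
  have hn₁R : (0 : ℝ) < (n₁ : ℝ) := by exact_mod_cast hn₁
  have hnum : (0 : ℝ) < (d₁ : ℝ) * n₂ - (d₂ : ℝ) * n₁ := by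
    have h3 : (0 : ℝ) < 3 * (n₁ : ℝ) := by linarith
    have := mul_pos hα h3
    rwa [div_mul_cancel₀ _ (ne_of_gt h3)] at this
  have hA : d₂ * n₁ < d₁ * n₂ := by
    have : (d₂ : ℝ) * n₁ < (d₁ : ℝ) * n₂ := by linarith
    exact_mod_cast this
  refine ⟨?_, ?_, ?_, ?_⟩
  · rintro rfl
    nlinarith [mul_pos hd₂ hn₁]
  · intro h3 hlt
    have hden : (0 : ℝ) < (n₂ : ℝ) - 3 := by
      have : (3 : ℝ) < (n₂ : ℝ) := by exact_mod_cast h3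
      linarith
    have h3n : (0 : ℝ) < 3 * (n₁ : ℝ) := by linarith
    have hcross : ((d₁ : ℝ) * n₂ - (d₂ : ℝ) * n₁) * ((n₂ : ℝ) - 3) < (d₂ : ℝ) * (3 * n₁) := by
      have := (div_lt_div_iff₀ h3n hden).mp hlt
      linarith
    have hZ : (d₁ * n₂ - d₂ * n₁) * (n₂ - 3) < d₂ * (3 * n₁) := by
      exact_mod_cast hcross
    -- implies d₁ * (n₂ - 3) < d₂ * n₁
    have hkey : d₁ * (n₂ - 3) < d₂ * n₁ := by nlinarith
    nlinarith [mul_pos hn₁ hd₂, mul_nonneg (mul_nonneg hn₁.le (by linarith : (0:ℤ) ≤ n₂ - 3)) (by linarith : (0:ℤ) ≤ g - 1)]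
  · rintro rfl hd
    have hdZ : 2 * g + 6 ≤ 3 * d₂ := by
      have : (2 * (g : ℝ) + 6) ≤ 3 * (d₂ : ℝ) := by
        rw [ge_iff_le, div_le_iff₀ (by norm_num : (0:ℝ) < 3)] at hd
        linarith
      exact_mod_cast this
    -- hA : d₂ * n₁ < 2 d₁
    nlinarith [mul_pos hn₁ hd₂]
  · rintro rfl hd hdiv
    have hdZ : 2 * g + 6 ≤ 3 * d₂ := by
      have : (2 * (g : ℝ) + 6) ≤ 3 * (d₂ : ℝ) := by
        rw [ge_iff_le, div_le_iff₀ (by norm_num : (0:ℝ) < 3)] at hd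
        linarith
      exact_mod_cast this
    have hd₁Z : d₂ * n₁ < d₁ := by
      have : (d₂ : ℝ) * n₁ < d₁ := by
        rw [gt_iff_lt, lt_div_iff₀ hn₁R] at hdiv
        linarith
      exact_mod_cast this
    nlinarith [hdZ, hd₁Z, hn₁, mul_pos hn₁ hd₂]
end
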